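/- Let g = 4 and let B be the positive definite symmetric bilinear form on ℝ⁴ associated to the quadratic form Σ_{i=1}^{4} r_i x_i² + Σ_{1 ≤ i < j ≤ 4, (i,j) ∉ {(1,2),(3,4)}} r_{ij} (x_i − x_j)² + r·q_ω + s·(x₁+x₂−x₃−x₄)², where q_ω(x) = 2(x₁²+x₂²+x₃²+x₄²) + 2x₁x₂ − 2(x₁+x₂)(x₃+x₄), and all r_i, r_{ij}, r, s > 0 (i.e. B lies in the interior of the Voronoi cone V₃). Then both conv{s₁, s₂, s₁+s₂, s₁+s₂+s₃, s₁+s₂+s₄} and conv{s₁, s₂, s₁+s₂+s₃, s₁+s₂+s₄, s₁+s₂+s₃+s₄} are Delaunay cells of B. -/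

import Mathlib

open Matrix Set

noncomputable section

/-- The standard lattice `ℤ^g` sitting inside `ℝ^g`. -/
def latticePts (g : ℕ) : Set (Fin g → ℝ) :=
  Set.range (fun a : Fin g → ℤ => fun i => (a i : ℝ))

/-- `σ` is a (closed) Delaunay cell of the bilinear form `B`: there is an `α ∈ ℝ^g`
such that `σ` is the convex hull of the lattice points nearest to `α`
(with respect to the distance defined by `B`). -/
def IsDelaunayCell {g : ℕ} (B : (Fin g → ℝ) → (Fin g → ℝ) → ℝ)
    (σ : Set (Fin g → ℝ)) : Prop :=
  ∃ α : Fin g → ℝ, σ = convexHull ℝ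
    {a | a ∈ latticePts g ∧ ∀ b ∈ latticePts g, B (a - α) (a - α) ≤ B (b - α) (b - α)}

/-- `C(0,S)`: the cone generated by `S` over the nonnegative reals. -/
def cone0 {g : ℕ} (S : Set (Fin g → ℝ)) : Set (Fin g → ℝ) :=
  {x | ∃ r : ℝ, 0 ≤ r ∧ ∃ y ∈ convexHull ℝ S, x = r • y}

/-- `Semi(0, S ∩ ℤ^g)`: the additive submonoid generated by the lattice points of `S`. -/
def semi0 {g : ℕ} (S : Set (Fin g → ℝ)) : Set (Fin g → ℝ) :=
  (AddSubmonoid.closure (S ∩ latticePts g) : AddSubmonoid (Fin g → ℝ))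

/-- The standard basis vector `s_i` of `ℝ^g`. -/
def stdV (g : ℕ) (i : Fin g) : Fin g → ℝ := Pi.single i 1

/-- Translation of a subset of `ℝ^g` by a lattice vector `v ∈ ℤ^g`. -/
def zTrans {g : ℕ} (v : Fin g → ℤ) (S : Set (Fin g → ℝ)) : Set (Fin g → ℝ) :=
  (fun x => (fun i => (v i : ℝ)) + x) '' S

/-- The rank-one symmetric matrix of the squared linear form `(c ⬝ x)²`. -/
def sqM (c : Fin 4 → ℝ) : Matrix (Fin 4) (Fin 4) ℝ := vecMulVec c c

/-- The matrix of the quadratic form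
`q_ω(x) = 2(x₁²+x₂²+x₃²+x₄²) + 2x₁x₂ − 2(x₁+x₂)(x₃+x₄)`. -/
def Mω : Matrix (Fin 4) (Fin 4) ℝ :=
  !![(2:ℝ), 1, -1, -1; 1, 2, -1, -1; -1, -1, 2, 0; -1, -1, 0, 2]

/-- A point in the interior of the Voronoi cone `V₃`: the matrix of
`Σ rᵢ xᵢ² + Σ_{i<j, (i,j)∉{(1,2),(3,4)}} r_{ij} (xᵢ-xⱼ)² + r·q_ω + s·(x₁+x₂-x₃-x₄)²`. -/
def MV3 (r₁ r₂ r₃ r₄ r₁₃ r₁₄ r₂₃ r₂₄ r s : ℝ) : Matrix (Fin 4) (Fin 4) ℝ :=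
  r₁ • sqM (stdV 4 0) + r₂ • sqM (stdV 4 1) + r₃ • sqM (stdV 4 2) + r₄ • sqM (stdV 4 3)
    + r₁₃ • sqM (stdV 4 0 - stdV 4 2) + r₁₄ • sqM (stdV 4 0 - stdV 4 3)
    + r₂₃ • sqM (stdV 4 1 - stdV 4 2) + r₂₄ • sqM (stdV 4 1 - stdV 4 3)
    + r • Mω + s • sqM (stdV 4 0 + stdV 4 1 - stdV 4 2 - stdV 4 3)

/-!
Let `Q` be the quadratic form of `MV3` and `ℓ(x) = x₁ + x₂ − x₃ − x₄`. If `Q(m) − λ·m ≥ c` on `ℤ⁴`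
with equality exactly on `V`, then `V` is the set of lattice points nearest to `α = ½ Q⁻¹ λ`, so
`conv V` is a Delaunay cell. For `k ∈ ℤ` the linear form `λ` is chosen so that `Q(m) − λ·m − c` is
the combination, with the positive weights `rᵢ, r_{ij}, r, s`, of `n (n − 1)` for `n = mᵢ` and
`n = mᵢ − mⱼ`, of `(m₁ − 1)² + (m₂ − 1)² + (m₃ − m₄)² + (ℓ(m) − 1)² − 1`, which is `≥ 0` because the
four integers have odd sum, and of `(ℓ(m) − k)(ℓ(m) − k − 1)`. All these integers are `≥ 0`, and
they vanish simultaneously exactly at the vertices of the first simplex for `k = 1` and of the second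
for `k = 0`.
-/

def intPoint {g : ℕ} (m : Fin g → ℤ) : Fin g → ℝ := fun i => m i

theorem latticePts_eq_range (g : ℕ) : latticePts g = range (intPoint (g := g)) := rfl

@[simp] theorem intPoint_apply {g : ℕ} (m : Fin g → ℤ) (i : Fin g) : intPoint m i = m i := rfl

theorem intPoint_add {g : ℕ} (m n : Fin g → ℤ) : intPoint (m + n) = intPoint m + intPoint n := by
  ext i
  simp

def stdZ (g : ℕ) (i : Fin g) : Fin g → ℤ := Pi.single i 1

theorem intPoint_stdZ {g : ℕ} (i : Fin g) : intPoint (stdZ g i) = stdV g i := by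
  ext j
  by_cases h : j = i <;> simp [stdZ, stdV, h]

theorem dotProduct_mulVec_sub_sub {g : ℕ} {M : Matrix (Fin g) (Fin g) ℝ} (hM : M.IsHermitian)
    {l α : Fin g → ℝ} (hα : M *ᵥ α = (2 : ℝ)⁻¹ • l) (x : Fin g → ℝ) :
    (x - α) ⬝ᵥ M *ᵥ (x - α) = x ⬝ᵥ M *ᵥ x - l ⬝ᵥ x + α ⬝ᵥ M *ᵥ α := by
  have hsymm : α ⬝ᵥ M *ᵥ x = x ⬝ᵥ M *ᵥ α := by
    rw [dotProduct_mulVec, dotProduct_comm, ← mulVec_transpose,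
      ← conjTranspose_eq_transpose_of_trivial, hM.eq]
  rw [mulVec_sub, sub_dotProduct, dotProduct_sub, dotProduct_sub, hsymm, hα, dotProduct_smul,
    smul_eq_mul, dotProduct_comm x l]
  ring

theorem isDelaunayCell_of_le {g : ℕ} {M : Matrix (Fin g) (Fin g) ℝ} (hM : M.PosDef)
    (l : Fin g → ℝ) (c : ℝ) {V : Set (Fin g → ℤ)}
    (hle : ∀ m, c ≤ intPoint m ⬝ᵥ M *ᵥ intPoint m - l ⬝ᵥ intPoint m)
    (heq : ∀ m, intPoint m ⬝ᵥ M *ᵥ intPoint m - l ⬝ᵥ intPoint m = c ↔ m ∈ V)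
    (hne : V.Nonempty) :
    IsDelaunayCell (fun x y => x ⬝ᵥ M *ᵥ y) (convexHull ℝ (intPoint '' V)) := by
  set α := (2 : ℝ)⁻¹ • (M⁻¹ *ᵥ l)
  have hα : M *ᵥ α = (2 : ℝ)⁻¹ • l := by
    rw [mulVec_smul, mulVec_mulVec,
      mul_nonsing_inv M ((isUnit_iff_isUnit_det M).mp hM.isUnit), one_mulVec]
  refine ⟨α, congrArg _ ?_⟩
  obtain ⟨m₀, hm₀⟩ := hne
  ext x
  simp only [latticePts_eq_range, mem_ofPred_eq, forall_mem_range, mem_image,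
    dotProduct_mulVec_sub_sub hM.isHermitian hα, add_le_add_iff_right]
  constructor
  · rintro ⟨m, hm, rfl⟩
    exact ⟨⟨m, rfl⟩, fun n => ((heq m).mpr hm).le.trans (hle n)⟩
  · rintro ⟨⟨m, rfl⟩, hm⟩
    exact ⟨m, (heq m).mp ((hm m₀).trans ((heq m₀).mpr hm₀).le |>.antisymm (hle m)), rfl⟩

theorem isDelaunayCell_of_eq_sum {g : ℕ} {ι : Type*} [Fintype ι] {M : Matrix (Fin g) (Fin g) ℝ}
    (hM : M.PosDef) (l : Fin g → ℝ) (c : ℝ) {w : ι → ℝ} {p : (Fin g → ℤ) → ι → ℤ}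
    (hw : ∀ i, 0 < w i) (hp : ∀ m i, 0 ≤ p m i)
    (hsum : ∀ m, intPoint m ⬝ᵥ M *ᵥ intPoint m - l ⬝ᵥ intPoint m = c + ∑ i, w i * p m i)
    {V : Set (Fin g → ℤ)} (hV : ∀ m, (∀ i, p m i = 0) ↔ m ∈ V) (hne : V.Nonempty) :
    IsDelaunayCell (fun x y => x ⬝ᵥ M *ᵥ y) (convexHull ℝ (intPoint '' V)) := by
  have hterm : ∀ m i, 0 ≤ w i * p m i := fun m i =>
    mul_nonneg (hw i).le (Int.cast_nonneg_iff.mpr (hp m i))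
  refine isDelaunayCell_of_le hM l c (fun m => ?_) (fun m => ?_) hne
  · rw [hsum]
    exact le_add_of_nonneg_right (Finset.sum_nonneg fun i _ => hterm m i)
  · simp only [hsum, add_eq_left, Finset.sum_eq_zero_iff_of_nonneg fun i _ => hterm m i,
      Finset.mem_univ, true_imp_iff, mul_eq_zero, (hw _).ne', false_or, Int.cast_eq_zero, hV]

theorem dotProduct_sqM_mulVec (c x : Fin 4 → ℝ) : x ⬝ᵥ sqM c *ᵥ x = (c ⬝ᵥ x) ^ 2 := by
  rw [sqM, vecMulVec_mulVec, op_smul_eq_smul, dotProduct_smul, smul_eq_mul, dotProduct_comm x c, sq]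

theorem stdV_dotProduct {g : ℕ} (i : Fin g) (x : Fin g → ℝ) : stdV g i ⬝ᵥ x = x i := by
  rw [stdV, single_dotProduct, one_mul]

theorem transpose_sqM (c : Fin 4 → ℝ) : (sqM c)ᵀ = sqM c := transpose_vecMulVec c c

theorem Mω_eq : Mω = sqM (stdV 4 0 + stdV 4 1 - stdV 4 2 - stdV 4 3) + sqM (stdV 4 0)
    + sqM (stdV 4 1) + sqM (stdV 4 2 - stdV 4 3) := by
  ext i j
  fin_cases i <;> fin_cases j <;> simp [Mω, sqM, stdV, vecMulVec_apply] <;> norm_num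

theorem Int.mul_sub_one_nonneg (n : ℤ) : 0 ≤ n * (n - 1) := by
  rcases le_or_gt n 0 with h | h <;> nlinarith

theorem Int.mul_sub_one_eq_zero_iff (n : ℤ) : n * (n - 1) = 0 ↔ 0 ≤ n ∧ n ≤ 1 := by
  rw [mul_eq_zero]
  omega

theorem one_le_sq_add_sq_add_sq_add_sq {a b c d : ℤ} (h : Odd (a + b + c + d)) :
    1 ≤ a ^ 2 + b ^ 2 + c ^ 2 + d ^ 2 := by
  by_contra! hlt
  have : a ^ 2 = 0 ∧ b ^ 2 = 0 ∧ c ^ 2 = 0 ∧ d ^ 2 = 0 := by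
    refine ⟨?_, ?_, ?_, ?_⟩ <;> linarith [sq_nonneg a, sq_nonneg b, sq_nonneg c, sq_nonneg d]
  simp only [pow_eq_zero_iff two_ne_zero] at this
  obtain ⟨rfl, rfl, rfl, rfl⟩ := this
  exact Int.not_odd_zero h

section V3

variable (r₁ r₂ r₃ r₄ r₁₃ r₁₄ r₂₃ r₂₄ r s : ℝ)

theorem MV3_isHermitian : (MV3 r₁ r₂ r₃ r₄ r₁₃ r₁₄ r₂₃ r₂₄ r s).IsHermitian := by
  simp only [IsHermitian, conjTranspose_eq_transpose_of_trivial, MV3, Mω_eq, transpose_add,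
    transpose_smul, transpose_sqM]

theorem dotProduct_MV3_mulVec (x : Fin 4 → ℝ) :
    x ⬝ᵥ MV3 r₁ r₂ r₃ r₄ r₁₃ r₁₄ r₂₃ r₂₄ r s *ᵥ x =
      r₁ * x 0 ^ 2 + r₂ * x 1 ^ 2 + r₃ * x 2 ^ 2 + r₄ * x 3 ^ 2
      + r₁₃ * (x 0 - x 2) ^ 2 + r₁₄ * (x 0 - x 3) ^ 2
      + r₂₃ * (x 1 - x 2) ^ 2 + r₂₄ * (x 1 - x 3) ^ 2
      + r * ((x 0 + x 1 - x 2 - x 3) ^ 2 + x 0 ^ 2 + x 1 ^ 2 + (x 2 - x 3) ^ 2)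
      + s * (x 0 + x 1 - x 2 - x 3) ^ 2 := by
  simp only [MV3, Mω_eq, add_mulVec, smul_mulVec, dotProduct_add, dotProduct_smul, smul_eq_mul,
    dotProduct_sqM_mulVec, add_dotProduct, sub_dotProduct, stdV_dotProduct]

def linV3 (k : ℤ) : Fin 4 → ℝ :=
  ![r₁ + r₁₃ + r₁₄ + 4 * r + (2 * k + 1) * s, r₂ + r₂₃ + r₂₄ + 4 * r + (2 * k + 1) * s,
    r₃ - r₁₃ - r₂₃ - 2 * r - (2 * k + 1) * s, r₄ - r₁₄ - r₂₄ - 2 * r - (2 * k + 1) * s]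

def cellTerms (k : ℤ) (m : Fin 4 → ℤ) : Fin 10 → ℤ :=
  ![m 0 * (m 0 - 1), m 1 * (m 1 - 1), m 2 * (m 2 - 1), m 3 * (m 3 - 1),
    (m 0 - m 2) * (m 0 - m 2 - 1), (m 0 - m 3) * (m 0 - m 3 - 1),
    (m 1 - m 2) * (m 1 - m 2 - 1), (m 1 - m 3) * (m 1 - m 3 - 1),
    (m 0 - 1) ^ 2 + (m 1 - 1) ^ 2 + (m 2 - m 3) ^ 2 + (m 0 + m 1 - m 2 - m 3 - 1) ^ 2 - 1,
    (m 0 + m 1 - m 2 - m 3 - k) * (m 0 + m 1 - m 2 - m 3 - k - 1)]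

theorem MV3_sub_linV3 (k : ℤ) (m : Fin 4 → ℤ) :
    intPoint m ⬝ᵥ MV3 r₁ r₂ r₃ r₄ r₁₃ r₁₄ r₂₃ r₂₄ r s *ᵥ intPoint m
        - linV3 r₁ r₂ r₃ r₄ r₁₃ r₁₄ r₂₃ r₂₄ r s k ⬝ᵥ intPoint m
      = -(2 * r + k * (k + 1) * s)
        + ∑ i, ![r₁, r₂, r₃, r₄, r₁₃, r₁₄, r₂₃, r₂₄, r, s] i * cellTerms k m i := by
  rw [dotProduct_MV3_mulVec]
  simp only [linV3, cellTerms, dotProduct, Fin.sum_univ_succ, Fin.sum_univ_zero, cons_val_zero,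
    cons_val_succ, intPoint_apply]
  push_cast
  ring

theorem cellTerms_nonneg (k : ℤ) (m : Fin 4 → ℤ) (i : Fin 10) : 0 ≤ cellTerms k m i := by
  have hω : 0 ≤ (m 0 - 1) ^ 2 + (m 1 - 1) ^ 2 + (m 2 - m 3) ^ 2
      + (m 0 + m 1 - m 2 - m 3 - 1) ^ 2 - 1 :=
    sub_nonneg.mpr (one_le_sq_add_sq_add_sq_add_sq ⟨m 0 + m 1 - m 3 - 2, by ring⟩)
  fin_cases i <;> first | exact hω | exact Int.mul_sub_one_nonneg _

theorem cellTerms_one_eq_zero_iff (m : Fin 4 → ℤ) :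
    (∀ i, cellTerms 1 m i = 0) ↔
      m ∈ ({stdZ 4 0, stdZ 4 1, stdZ 4 0 + stdZ 4 1, stdZ 4 0 + stdZ 4 1 + stdZ 4 2,
        stdZ 4 0 + stdZ 4 1 + stdZ 4 3} : Set (Fin 4 → ℤ)) := by
  constructor
  · intro h
    simp only [Fin.forall_fin_succ, cellTerms, cons_val_zero, cons_val_succ, cons_val_fin_one,
      Int.mul_sub_one_eq_zero_iff, IsEmpty.forall_iff, and_true] at h
    simp only [mem_insert_iff, mem_singleton_iff, funext_iff, Fin.forall_fin_succ, stdZ,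
      Pi.add_apply, Pi.single_apply, Fin.succ_zero_eq_one, Fin.succ_one_eq_two, Fin.reduceSucc,
      Fin.reduceEq, ↓reduceIte, IsEmpty.forall_iff, and_true]
    omega
  · rintro (rfl | rfl | rfl | rfl | rfl) <;> simp [Fin.forall_fin_succ, cellTerms, stdZ]

theorem cellTerms_zero_eq_zero_iff (m : Fin 4 → ℤ) :
    (∀ i, cellTerms 0 m i = 0) ↔
      m ∈ ({stdZ 4 0, stdZ 4 1, stdZ 4 0 + stdZ 4 1 + stdZ 4 2, stdZ 4 0 + stdZ 4 1 + stdZ 4 3,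
        stdZ 4 0 + stdZ 4 1 + stdZ 4 2 + stdZ 4 3} : Set (Fin 4 → ℤ)) := by
  constructor
  · intro h
    -- only the `q_ω` term rules out the origin
    have hm : ¬(m 0 = 0 ∧ m 1 = 0 ∧ m 2 = 0 ∧ m 3 = 0) := by
      rintro ⟨h0, h1, h2, h3⟩
      simpa [cellTerms, h0, h1, h2, h3] using h 8
    simp only [Fin.forall_fin_succ, cellTerms, cons_val_zero, cons_val_succ, cons_val_fin_one,
      Int.mul_sub_one_eq_zero_iff, IsEmpty.forall_iff, and_true] at h
    simp only [mem_insert_iff, mem_singleton_iff, funext_iff, Fin.forall_fin_succ, stdZ,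
      Pi.add_apply, Pi.single_apply, Fin.succ_zero_eq_one, Fin.succ_one_eq_two, Fin.reduceSucc,
      Fin.reduceEq, ↓reduceIte, IsEmpty.forall_iff, and_true]
    omega
  · rintro (rfl | rfl | rfl | rfl | rfl) <;> simp [Fin.forall_fin_succ, cellTerms, stdZ]

variable {r₁ r₂ r₃ r₄ r₁₃ r₁₄ r₂₃ r₂₄ r s}

theorem MV3_posDef (h₁ : 0 < r₁) (h₂ : 0 < r₂) (h₃ : 0 < r₃) (h₄ : 0 < r₄)
    (h₁₃ : 0 < r₁₃) (h₁₄ : 0 < r₁₄) (h₂₃ : 0 < r₂₃) (h₂₄ : 0 < r₂₄) (hr : 0 < r) (hs : 0 < s) :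
    (MV3 r₁ r₂ r₃ r₄ r₁₃ r₁₄ r₂₃ r₂₄ r s).PosDef := by
  refine .of_dotProduct_mulVec_pos (MV3_isHermitian ..) fun x hx => ?_
  obtain ⟨i, hi⟩ := Function.ne_iff.mp hx
  have hdiag : 0 < r₁ * x 0 ^ 2 + r₂ * x 1 ^ 2 + r₃ * x 2 ^ 2 + r₄ * x 3 ^ 2 := by
    fin_cases i <;> simp only [Pi.zero_apply] at hi <;> positivity
  rw [star_trivial, dotProduct_MV3_mulVec]
  positivity

end V3

/-- For `B` in the interior of the Voronoi cone `V₃`, the simplices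
`conv{s₁, s₂, s₁+s₂, s₁+s₂+s₃, s₁+s₂+s₄}` and
`conv{s₁, s₂, s₁+s₂+s₃, s₁+s₂+s₄, s₁+s₂+s₃+s₄}` are Delaunay cells. -/
theorem delaunay_cells_V3_examples
    (r₁ r₂ r₃ r₄ r₁₃ r₁₄ r₂₃ r₂₄ r s : ℝ)
    (h₁ : 0 < r₁) (h₂ : 0 < r₂) (h₃ : 0 < r₃) (h₄ : 0 < r₄)
    (h₁₃ : 0 < r₁₃) (h₁₄ : 0 < r₁₄)
    (h₂₃ : 0 < r₂₃) (h₂₄ : 0 < r₂₄) (hr : 0 < r) (hs : 0 < s) :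
    IsDelaunayCell
      (fun x y => x ⬝ᵥ (MV3 r₁ r₂ r₃ r₄ r₁₃ r₁₄ r₂₃ r₂₄ r s).mulVec y)
      (convexHull ℝ
        {stdV 4 0, stdV 4 1, stdV 4 0 + stdV 4 1,
          stdV 4 0 + stdV 4 1 + stdV 4 2, stdV 4 0 + stdV 4 1 + stdV 4 3}) ∧
    IsDelaunayCell
      (fun x y => x ⬝ᵥ (MV3 r₁ r₂ r₃ r₄ r₁₃ r₁₄ r₂₃ r₂₄ r s).mulVec y)
      (convexHull ℝ
        {stdV 4 0, stdV 4 1,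
          stdV 4 0 + stdV 4 1 + stdV 4 2, stdV 4 0 + stdV 4 1 + stdV 4 3,
          stdV 4 0 + stdV 4 1 + stdV 4 2 + stdV 4 3}) := by
  have hM := MV3_posDef h₁ h₂ h₃ h₄ h₁₃ h₁₄ h₂₃ h₂₄ hr hs
  have hw : ∀ i, 0 < ![r₁, r₂, r₃, r₄, r₁₃, r₁₄, r₂₃, r₂₄, r, s] i := by
    simp [Fin.forall_fin_succ, *]
  have cell (k : ℤ) {V : Set (Fin 4 → ℤ)} (hV : ∀ m, (∀ i, cellTerms k m i = 0) ↔ m ∈ V)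
      (hne : V.Nonempty) :=
    isDelaunayCell_of_eq_sum hM _ _ hw (cellTerms_nonneg k)
      (MV3_sub_linV3 r₁ r₂ r₃ r₄ r₁₃ r₁₄ r₂₃ r₂₄ r s k) hV hne
  constructor
  · simpa [image_insert_eq, intPoint_add, intPoint_stdZ] using
      cell 1 cellTerms_one_eq_zero_iff (insert_nonempty _ _)
  · simpa [image_insert_eq, intPoint_add, intPoint_stdZ] using
      cell 0 cellTerms_zero_eq_zero_iff (insert_nonempty _ _)
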